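/- Let σ = (1/(d+1)) Φ_d + (d/(d+1)) (1/d²) I be the separable isotropic state on C^d ⊗ C^d. Then for every PPT measurement M (all POVM elements positive under partial transpose), D(M(Φ_d)||M(σ)) ≤ log((d+1)/2); consequently E_{r,PPT}(Φ_d) ≤ log(d+1) − 1. -/

import Mathlib

open Matrix Filter
open scoped Kronecker ENNReal Classical ComplexOrder

noncomputable section

namespace QIT

/-- A (finite-dimensional) quantum state: positive semidefinite with unit trace. -/
def IsState {d : Type} [Fintype d] (ρ : Matrix d d ℂ) : Prop :=
  ρ.PosSemidef ∧ ρ.trace = 1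

/-- Partial trace over the first tensor factor. -/
def ptrFst {X Y : Type} [Fintype X] (M : Matrix (X × Y) (X × Y) ℂ) : Matrix Y Y ℂ :=
  Matrix.of fun b b' => ∑ a, M (a, b) (a, b')

/-- Partial trace over the second tensor factor. -/
def ptrSnd {X Y : Type} [Fintype Y] (M : Matrix (X × Y) (X × Y) ℂ) : Matrix X X ℂ :=
  Matrix.of fun a a' => ∑ b, M (a, b) (a', b)

/-- For a tripartite state on (A ⊗ B) ⊗ E, trace out the middle factor B, giving A ⊗ E. -/
def ptrMid {X Y Z : Type} [Fintype Y] (M : Matrix ((X × Y) × Z) ((X × Y) × Z) ℂ) :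
    Matrix (X × Z) (X × Z) ℂ :=
  Matrix.of fun p q => ∑ b, M ((p.1, b), p.2) ((q.1, b), q.2)

/-- For a tripartite state on (A ⊗ B) ⊗ E, trace out the leftmost factor A, giving B ⊗ E. -/
def ptrLeft {X Y Z : Type} [Fintype X] (M : Matrix ((X × Y) × Z) ((X × Y) × Z) ℂ) :
    Matrix (Y × Z) (Y × Z) ℂ :=
  Matrix.of fun p q => ∑ a, M ((a, p.1), p.2) ((a, q.1), q.2)

/-- Separable states on a bipartite system. -/
def IsSeparable {X Y : Type} [Fintype X] [Fintype Y]
    (σ : Matrix (X × Y) (X × Y) ℂ) : Prop :=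
  ∃ (n : ℕ) (p : Fin n → ℝ) (ρ1 : Fin n → Matrix X X ℂ) (ρ2 : Fin n → Matrix Y Y ℂ),
    (∀ i, 0 ≤ p i) ∧ (∑ i, p i) = 1 ∧ (∀ i, IsState (ρ1 i)) ∧ (∀ i, IsState (ρ2 i)) ∧
    σ = ∑ i, (p i : ℂ) • (ρ1 i ⊗ₖ ρ2 i)

/-- Matrix logarithm (base 2) of a Hermitian matrix via the spectral decomposition,
with the convention log 0 = 0 on the kernel; junk value 0 on non-Hermitian input. -/
def matLogb {d : Type} [Fintype d] [DecidableEq d] (A : Matrix d d ℂ) : Matrix d d ℂ :=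
  if h : A.IsHermitian then
    (h.eigenvectorUnitary : Matrix d d ℂ) *
      Matrix.diagonal (fun i => ((Real.logb 2 (h.eigenvalues i) : ℝ) : ℂ)) *
      star (h.eigenvectorUnitary : Matrix d d ℂ)
  else 0

/-- Quantum relative entropy (base 2), +∞ if the support condition fails.  (For positive
semidefinite `σ`, the condition `∀ v, σ v = 0 → ρ v = 0` on kernels is equivalent to
supp ρ ⊆ supp σ.) -/
def qRelEnt {d : Type} [Fintype d] [DecidableEq d] (ρ σ : Matrix d d ℂ) : ℝ≥0∞ :=
  if ∀ v : d → ℂ, σ.mulVec v = 0 → ρ.mulVec v = 0 then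
    ENNReal.ofReal ((ρ * (matLogb ρ - matLogb σ)).trace.re)
  else ⊤

/-- Relative entropy of entanglement. -/
def Er {X Y : Type} [Fintype X] [DecidableEq X] [Fintype Y] [DecidableEq Y]
    (ρ : Matrix (X × Y) (X × Y) ℂ) : ℝ≥0∞ :=
  ⨅ (σ : Matrix (X × Y) (X × Y) ℂ) (_ : IsSeparable σ), qRelEnt ρ σ

/-- n-fold tensor power of a bipartite state, arranged as a state on Aⁿ ⊗ Bⁿ. -/
def tpow {X Y : Type} (ρ : Matrix (X × Y) (X × Y) ℂ) (n : ℕ) :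
    Matrix ((Fin n → X) × (Fin n → Y)) ((Fin n → X) × (Fin n → Y)) ℂ :=
  Matrix.of fun x y => ∏ i, ρ (x.1 i, x.2 i) (y.1 i, y.2 i)

/-- n-fold tensor power of a tripartite state on (A⊗B)⊗E, arranged on (Aⁿ⊗Bⁿ)⊗Eⁿ. -/
def tpow3 {X Y Z : Type} (ρ : Matrix ((X × Y) × Z) ((X × Y) × Z) ℂ) (n : ℕ) :
    Matrix (((Fin n → X) × (Fin n → Y)) × (Fin n → Z))
           (((Fin n → X) × (Fin n → Y)) × (Fin n → Z)) ℂ :=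
  Matrix.of fun u v => ∏ i, ρ ((u.1.1 i, u.1.2 i), u.2 i) ((v.1.1 i, v.1.2 i), v.2 i)

/-- Regularized relative entropy of entanglement. -/
def ErReg {X Y : Type} [Fintype X] [DecidableEq X] [Fintype Y] [DecidableEq Y]
    (ρ : Matrix (X × Y) (X × Y) ℂ) : ℝ≥0∞ :=
  Filter.limsup (fun n : ℕ => Er (tpow ρ n) / (n : ℝ≥0∞)) Filter.atTop

/-- Classical relative entropy (base 2) of two finitely supported "probability vectors". -/
def klDiv2 {X : Type} [Fintype X] (P Q : X → ℝ) : ℝ≥0∞ :=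
  if ∀ x, Q x = 0 → P x = 0 then
    ENNReal.ofReal (∑ x, P x * Real.logb 2 (P x / Q x))
  else ⊤

/-- Outcome distribution of a POVM on a state. -/
def mProb {d X : Type} [Fintype d] (M : X → Matrix d d ℂ) (ρ : Matrix d d ℂ) : X → ℝ :=
  fun x => ((ρ * M x).trace).re

/-- POVM condition. -/
def IsPOVM {d X : Type} [Fintype d] [DecidableEq d] [Fintype X]
    (M : X → Matrix d d ℂ) : Prop :=
  (∀ x, (M x).PosSemidef) ∧ (∑ x, M x) = 1

/-- Conditions for a one-way (A→B) LOCC measurement with POVM elements R_k ⊗ S_{k,ℓ}. -/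
def OneLOCCData {X Y : Type} [Fintype X] [DecidableEq X] [Fintype Y] [DecidableEq Y]
    {k l : ℕ} (R : Fin k → Matrix X X ℂ) (S : Fin k → Fin l → Matrix Y Y ℂ) : Prop :=
  (∀ i, (R i).PosSemidef) ∧ (∑ i, R i) = 1 ∧
    (∀ i j, (S i j).PosSemidef) ∧ (∀ i, (∑ j, S i j) = 1)

/-- The POVM of a one-way LOCC measurement. -/
def oneLOCCPOVM {X Y : Type} {k l : ℕ} (R : Fin k → Matrix X X ℂ)
    (S : Fin k → Fin l → Matrix Y Y ℂ) : Fin k × Fin l → Matrix (X × Y) (X × Y) ℂ :=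
  fun p => R p.1 ⊗ₖ S p.1 p.2

/-- One-way-LOCC restricted relative entropy of entanglement E_{r,1-LOCC}. -/
def ErOneLOCC {X Y : Type} [Fintype X] [DecidableEq X] [Fintype Y] [DecidableEq Y]
    (ρ : Matrix (X × Y) (X × Y) ℂ) : ℝ≥0∞ :=
  ⨅ (σ : Matrix (X × Y) (X × Y) ℂ) (_ : IsSeparable σ),
    ⨆ (k : ℕ) (l : ℕ) (R : Fin k → Matrix X X ℂ) (S : Fin k → Fin l → Matrix Y Y ℂ)
      (_ : OneLOCCData R S),
      klDiv2 (mProb (oneLOCCPOVM R S) ρ) (mProb (oneLOCCPOVM R S) σ)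

/-- Regularized E_{r,1-LOCC}. -/
def ErOneLOCCReg {X Y : Type} [Fintype X] [DecidableEq X] [Fintype Y] [DecidableEq Y]
    (ρ : Matrix (X × Y) (X × Y) ℂ) : ℝ≥0∞ :=
  Filter.limsup (fun n : ℕ => ErOneLOCC (tpow ρ n) / (n : ℝ≥0∞)) Filter.atTop

/-- LO (product) restricted relative entropy of entanglement E_{r,LO}. -/
def ErLO {X Y : Type} [Fintype X] [DecidableEq X] [Fintype Y] [DecidableEq Y]
    (ρ : Matrix (X × Y) (X × Y) ℂ) : ℝ≥0∞ :=
  ⨅ (σ : Matrix (X × Y) (X × Y) ℂ) (_ : IsSeparable σ),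
    ⨆ (k : ℕ) (l : ℕ) (R : Fin k → Matrix X X ℂ) (S : Fin l → Matrix Y Y ℂ)
      (_ : (∀ i, (R i).PosSemidef) ∧ (∑ i, R i) = 1 ∧
            (∀ j, (S j).PosSemidef) ∧ (∑ j, S j) = 1),
      klDiv2 (mProb (fun p : Fin k × Fin l => R p.1 ⊗ₖ S p.2) ρ)
             (mProb (fun p : Fin k × Fin l => R p.1 ⊗ₖ S p.2) σ)

def ErLOReg {X Y : Type} [Fintype X] [DecidableEq X] [Fintype Y] [DecidableEq Y]
    (ρ : Matrix (X × Y) (X × Y) ℂ) : ℝ≥0∞ :=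
  Filter.limsup (fun n : ℕ => ErLO (tpow ρ n) / (n : ℝ≥0∞)) Filter.atTop

/-- Families of pairs of local Kraus-operator products realizable by a finite-round
LOCC protocol (with two-way classical communication) on a bipartite system. -/
inductive LOCCFam (dA dB : Type) [Fintype dA] [DecidableEq dA] [Fintype dB] [DecidableEq dB] :
    (dA' dB' X : Type) → (X → Matrix dA' dA ℂ) → (X → Matrix dB' dB ℂ) → Prop
  | base : LOCCFam dA dB dA dB PUnit (fun _ => 1) (fun _ => 1)
  | stepA {dA' dB' X : Type} {a : X → Matrix dA' dA ℂ} {b : X → Matrix dB' dB ℂ}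
      (h : LOCCFam dA dB dA' dB' X a b)
      {dA'' K : Type} [Fintype dA'] [DecidableEq dA'] [Fintype dA''] [Fintype K]
      (κ : X → K → Matrix dA'' dA' ℂ)
      (hκ : ∀ x, (∑ j, (κ x j)ᴴ * κ x j) = (1 : Matrix dA' dA' ℂ)) :
      LOCCFam dA dB dA'' dB' (X × K) (fun p => κ p.1 p.2 * a p.1) (fun p => b p.1)
  | stepB {dA' dB' X : Type} {a : X → Matrix dA' dA ℂ} {b : X → Matrix dB' dB ℂ}
      (h : LOCCFam dA dB dA' dB' X a b)
      {dB'' K : Type} [Fintype dB'] [DecidableEq dB'] [Fintype dB''] [Fintype K]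
      (κ : X → K → Matrix dB'' dB' ℂ)
      (hκ : ∀ x, (∑ j, (κ x j)ᴴ * κ x j) = (1 : Matrix dB' dB' ℂ)) :
      LOCCFam dA dB dA' dB'' (X × K) (fun p => a p.1) (fun p => κ p.1 p.2 * b p.1)
  | relabel {dA' dB' X : Type} {a : X → Matrix dA' dA ℂ} {b : X → Matrix dB' dB ℂ}
      (h : LOCCFam dA dB dA' dB' X a b) {Y : Type} (e : Y ≃ X) :
      LOCCFam dA dB dA' dB' Y (fun y => a (e y)) (fun y => b (e y))

/-- A POVM implementable by (two-way) LOCC: outcomes are coarse-grainings of the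
histories of an LOCC protocol, with POVM elements (aᴴa) ⊗ (bᴴb). -/
def IsLOCCPOVM {X Y : Type} [Fintype X] [DecidableEq X] [Fintype Y] [DecidableEq Y]
    {m : ℕ} (M : Fin m → Matrix (X × Y) (X × Y) ℂ) : Prop :=
  ∃ (p q n : ℕ) (a : Fin n → Matrix (Fin p) X ℂ) (b : Fin n → Matrix (Fin q) Y ℂ)
    (g : Fin n → Fin m),
    LOCCFam X Y (Fin p) (Fin q) (Fin n) a b ∧
    ∀ y, M y = ∑ x ∈ Finset.univ.filter (fun x => g x = y),
                  ((a x)ᴴ * a x) ⊗ₖ ((b x)ᴴ * b x)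

/-- LOCC restricted relative entropy of entanglement E_{r,LOCC}. -/
def ErLOCC {X Y : Type} [Fintype X] [DecidableEq X] [Fintype Y] [DecidableEq Y]
    (ρ : Matrix (X × Y) (X × Y) ℂ) : ℝ≥0∞ :=
  ⨅ (σ : Matrix (X × Y) (X × Y) ℂ) (_ : IsSeparable σ),
    ⨆ (m : ℕ) (M : Fin m → Matrix (X × Y) (X × Y) ℂ) (_ : IsLOCCPOVM M),
      klDiv2 (mProb M ρ) (mProb M σ)

def ErLOCCReg {X Y : Type} [Fintype X] [DecidableEq X] [Fintype Y] [DecidableEq Y]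
    (ρ : Matrix (X × Y) (X × Y) ℂ) : ℝ≥0∞ :=
  Filter.limsup (fun n : ℕ => ErLOCC (tpow ρ n) / (n : ℝ≥0∞)) Filter.atTop

/-- Separable (positive) operator. -/
def IsSepOp {X Y : Type} [Fintype X] [Fintype Y] (Q : Matrix (X × Y) (X × Y) ℂ) : Prop :=
  ∃ (n : ℕ) (a : Fin n → Matrix X X ℂ) (b : Fin n → Matrix Y Y ℂ),
    (∀ i, (a i).PosSemidef) ∧ (∀ i, (b i).PosSemidef) ∧ Q = ∑ i, a i ⊗ₖ b i

/-- SEP restricted relative entropy of entanglement E_{r,SEP}. -/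
def ErSEP {X Y : Type} [Fintype X] [DecidableEq X] [Fintype Y] [DecidableEq Y]
    (ρ : Matrix (X × Y) (X × Y) ℂ) : ℝ≥0∞ :=
  ⨅ (σ : Matrix (X × Y) (X × Y) ℂ) (_ : IsSeparable σ),
    ⨆ (m : ℕ) (M : Fin m → Matrix (X × Y) (X × Y) ℂ)
      (_ : IsPOVM M ∧ ∀ x, IsSepOp (M x)),
      klDiv2 (mProb M ρ) (mProb M σ)

def ErSEPReg {X Y : Type} [Fintype X] [DecidableEq X] [Fintype Y] [DecidableEq Y]
    (ρ : Matrix (X × Y) (X × Y) ℂ) : ℝ≥0∞ :=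
  Filter.limsup (fun n : ℕ => ErSEP (tpow ρ n) / (n : ℝ≥0∞)) Filter.atTop

/-- Partial transpose on the first factor. -/
def ptranspose {X Y : Type} (Q : Matrix (X × Y) (X × Y) ℂ) : Matrix (X × Y) (X × Y) ℂ :=
  Matrix.of fun p q => Q (q.1, p.2) (p.1, q.2)

/-- PPT restricted relative entropy of entanglement E_{r,PPT}. -/
def ErPPT {X Y : Type} [Fintype X] [DecidableEq X] [Fintype Y] [DecidableEq Y]
    (ρ : Matrix (X × Y) (X × Y) ℂ) : ℝ≥0∞ :=
  ⨅ (σ : Matrix (X × Y) (X × Y) ℂ) (_ : IsSeparable σ),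
    ⨆ (m : ℕ) (M : Fin m → Matrix (X × Y) (X × Y) ℂ)
      (_ : IsPOVM M ∧ ∀ x, (ptranspose (M x)).PosSemidef),
      klDiv2 (mProb M ρ) (mProb M σ)

def ErPPTReg {X Y : Type} [Fintype X] [DecidableEq X] [Fintype Y] [DecidableEq Y]
    (ρ : Matrix (X × Y) (X × Y) ℂ) : ℝ≥0∞ :=
  Filter.limsup (fun n : ℕ => ErPPT (tpow ρ n) / (n : ℝ≥0∞)) Filter.atTop

/-- Von Neumann entropy (base 2), via eigenvalues; junk value 0 on non-Hermitian input. -/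
def vnEntropy {d : Type} [Fintype d] [DecidableEq d] (ρ : Matrix d d ℂ) : ℝ :=
  if h : ρ.IsHermitian then -∑ i, h.eigenvalues i * Real.logb 2 (h.eigenvalues i) else 0

/-- Quantum conditional mutual information I(A;B|E) of a state on (A⊗B)⊗E. -/
def qcmi {X Y Z : Type} [Fintype X] [DecidableEq X] [Fintype Y] [DecidableEq Y]
    [Fintype Z] [DecidableEq Z] (ρ : Matrix ((X × Y) × Z) ((X × Y) × Z) ℂ) : ℝ :=
  vnEntropy (ptrMid ρ) + vnEntropy (ptrLeft ρ) - vnEntropy ρ - vnEntropy (ptrFst ρ)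

/-- Squashed entanglement (infimum over finite-dimensional extensions). -/
def Esq {X Y : Type} [Fintype X] [DecidableEq X] [Fintype Y] [DecidableEq Y]
    (ρ : Matrix (X × Y) (X × Y) ℂ) : ℝ≥0∞ :=
  ⨅ (e : ℕ) (ω : Matrix ((X × Y) × Fin e) ((X × Y) × Fin e) ℂ)
    (_ : IsState ω ∧ ptrSnd ω = ρ),
    ENNReal.ofReal (qcmi ω / 2)

/-- The classical extension Σ_i p_i ρ_i ⊗ |i⟩⟨i| of an ensemble. -/
def classExt {X Y : Type} {m : ℕ} (p : Fin m → ℝ)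
    (ρi : Fin m → Matrix (X × Y) (X × Y) ℂ) :
    Matrix ((X × Y) × Fin m) ((X × Y) × Fin m) ℂ :=
  Matrix.of fun u v => if u.2 = v.2 then (p u.2 : ℂ) * ρi u.2 u.1 v.1 else 0

/-- c-squashed entanglement (infimum over classical extensions). -/
def Esqc {X Y : Type} [Fintype X] [DecidableEq X] [Fintype Y] [DecidableEq Y]
    (ρ : Matrix (X × Y) (X × Y) ℂ) : ℝ≥0∞ :=
  ⨅ (m : ℕ) (p : Fin m → ℝ) (ρi : Fin m → Matrix (X × Y) (X × Y) ℂ)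
    (_ : (∀ i, 0 ≤ p i) ∧ (∑ i, p i) = 1 ∧ (∀ i, IsState (ρi i)) ∧
          (∑ i, (p i : ℂ) • ρi i) = ρ),
    ENNReal.ofReal (qcmi (classExt p ρi) / 2)

def EsqcReg {X Y : Type} [Fintype X] [DecidableEq X] [Fintype Y] [DecidableEq Y]
    (ρ : Matrix (X × Y) (X × Y) ℂ) : ℝ≥0∞ :=
  Filter.limsup (fun n : ℕ => Esqc (tpow ρ n) / (n : ℝ≥0∞)) Filter.atTop

/-- Mutual information I(X;Y) of a bipartite state. -/
def mutInfo {X Y : Type} [Fintype X] [DecidableEq X] [Fintype Y] [DecidableEq Y]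
    (ρ : Matrix (X × Y) (X × Y) ℂ) : ℝ :=
  vnEntropy (ptrSnd ρ) + vnEntropy (ptrFst ρ) - vnEntropy ρ

/-- Marginal on A⊗B of a state on (A⊗A')⊗(B⊗B'). -/
def margMain {X Y : Type} {a b : ℕ}
    (ω : Matrix ((X × Fin a) × (Y × Fin b)) ((X × Fin a) × (Y × Fin b)) ℂ) :
    Matrix (X × Y) (X × Y) ℂ :=
  Matrix.of fun p q => ∑ i, ∑ j, ω ((p.1, i), (p.2, j)) ((q.1, i), (q.2, j))

/-- Marginal on A'⊗B' of a state on (A⊗A')⊗(B⊗B'). -/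
def margAux {X Y : Type} [Fintype X] [Fintype Y] {a b : ℕ}
    (ω : Matrix ((X × Fin a) × (Y × Fin b)) ((X × Fin a) × (Y × Fin b)) ℂ) :
    Matrix (Fin a × Fin b) (Fin a × Fin b) ℂ :=
  Matrix.of fun p q => ∑ x, ∑ y, ω ((x, p.1), (y, p.2)) ((x, q.1), (y, q.2))

/-- Conditional entanglement of mutual information. -/
def EI {X Y : Type} [Fintype X] [DecidableEq X] [Fintype Y] [DecidableEq Y]
    (ρ : Matrix (X × Y) (X × Y) ℂ) : ℝ≥0∞ :=
  ⨅ (a : ℕ) (b : ℕ)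
    (ω : Matrix ((X × Fin a) × (Y × Fin b)) ((X × Fin a) × (Y × Fin b)) ℂ)
    (_ : IsState ω ∧ margMain ω = ρ),
    ENNReal.ofReal ((mutInfo ω - mutInfo (margAux ω)) / 2)

/-- An LOCC quantum channel between bipartite systems. -/
def IsLOCCChannel {X Y X' Y' : Type} [Fintype X] [DecidableEq X] [Fintype Y] [DecidableEq Y]
    [Fintype X'] [Fintype Y']
    (Λ : Matrix (X × Y) (X × Y) ℂ → Matrix (X' × Y') (X' × Y') ℂ) : Prop :=
  ∃ (n : ℕ) (a : Fin n → Matrix X' X ℂ) (b : Fin n → Matrix Y' Y ℂ),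
    LOCCFam X Y X' Y' (Fin n) a b ∧
    ∀ ω, Λ ω = ∑ x, (a x ⊗ₖ b x) * ω * (a x ⊗ₖ b x)ᴴ

/-- E_{r,→}: the LOCC-processed one-way LOCC relative entropy of entanglement. -/
def ErArrow {X Y : Type} [Fintype X] [DecidableEq X] [Fintype Y] [DecidableEq Y]
    (ρ : Matrix (X × Y) (X × Y) ℂ) : ℝ≥0∞ :=
  ⨆ (p : ℕ) (q : ℕ)
    (Λ : Matrix (X × Y) (X × Y) ℂ → Matrix (Fin p × Fin q) (Fin p × Fin q) ℂ)
    (_ : IsLOCCChannel Λ),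
    ErOneLOCC (Λ ρ)

def ErArrowReg {X Y : Type} [Fintype X] [DecidableEq X] [Fintype Y] [DecidableEq Y]
    (ρ : Matrix (X × Y) (X × Y) ℂ) : ℝ≥0∞ :=
  Filter.limsup (fun n : ℕ => ErArrow (tpow ρ n) / (n : ℝ≥0∞)) Filter.atTop

/-- Trace norm of a Hermitian matrix (junk value 0 on non-Hermitian input). -/
def traceNorm {d : Type} [Fintype d] [DecidableEq d] (M : Matrix d d ℂ) : ℝ :=
  if h : M.IsHermitian then ∑ i, |h.eigenvalues i| else 0

/-- The rank-d maximally entangled state Φ_d. -/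
def MES (d : ℕ) : Matrix (Fin d × Fin d) (Fin d × Fin d) ℂ :=
  Matrix.of fun p q => if p.1 = p.2 ∧ q.1 = q.2 then ((d : ℂ))⁻¹ else 0

/-- Distillable entanglement. -/
def Ed {X Y : Type} [Fintype X] [DecidableEq X] [Fintype Y] [DecidableEq Y]
    (ρ : Matrix (X × Y) (X × Y) ℂ) : ℝ≥0∞ :=
  ⨆ (dseq : ℕ → ℕ)
    (Λ : ∀ n : ℕ, Matrix ((Fin n → X) × (Fin n → Y)) ((Fin n → X) × (Fin n → Y)) ℂ →
          Matrix (Fin (dseq n) × Fin (dseq n)) (Fin (dseq n) × Fin (dseq n)) ℂ)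
    (_ : (∀ n, IsLOCCChannel (Λ n)) ∧
         Filter.Tendsto (fun n => traceNorm (Λ n (tpow ρ n) - MES (dseq n)))
           Filter.atTop (nhds 0)),
    Filter.liminf (fun n : ℕ => ENNReal.ofReal (Real.logb 2 (dseq n)) / (n : ℝ≥0∞))
      Filter.atTop

/-- A one-way LOCC (A→B) quantum instrument with classical output `Fin m` and quantum
output on B: Alice applies an instrument with outcomes k and Kraus operators A k i,
communicates k; Bob applies an instrument with classical outcome x and Kraus B k x j. -/
structure OneLOCCInstr (X Y : Type) [Fintype X] [DecidableEq X] [Fintype Y] [DecidableEq Y]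
    (m : ℕ) where
  nK : ℕ
  nI : ℕ
  nJ : ℕ
  A : Fin nK → Fin nI → Matrix X X ℂ
  B : Fin nK → Fin m → Fin nJ → Matrix Y Y ℂ
  hA : (∑ k, ∑ i, (A k i)ᴴ * A k i) = 1
  hB : ∀ k, (∑ x, ∑ j, (B k x j)ᴴ * B k x j) = 1

/-- The x-component of the instrument applied to a state of AB together with an
untouched environment E. -/
def OneLOCCInstr.comp {X Y Z : Type} [Fintype X] [DecidableEq X] [Fintype Y] [DecidableEq Y]
    [Fintype Z] [DecidableEq Z] {m : ℕ} (T : OneLOCCInstr X Y m) (x : Fin m)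
    (ω : Matrix ((X × Y) × Z) ((X × Y) × Z) ℂ) : Matrix (Y × Z) (Y × Z) ℂ :=
  ∑ k, ∑ i, ∑ j,
    ptrLeft (((T.A k i ⊗ₖ T.B k x j) ⊗ₖ (1 : Matrix Z Z ℂ)) * ω *
             ((T.A k i ⊗ₖ T.B k x j) ⊗ₖ (1 : Matrix Z Z ℂ))ᴴ)

/-- The classical output distribution T^c of the instrument on a state of AB. -/
def OneLOCCInstr.cOut {X Y : Type} [Fintype X] [DecidableEq X] [Fintype Y] [DecidableEq Y]
    {m : ℕ} (T : OneLOCCInstr X Y m) (ω : Matrix (X × Y) (X × Y) ℂ) : Fin m → ℝ :=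
  fun x => (∑ k, ∑ i, ∑ j,
    ((T.A k i ⊗ₖ T.B k x j) * ω * (T.A k i ⊗ₖ T.B k x j)ᴴ).trace).re

/-- The quantum output T^q ⊗ id_E of the instrument on a state of (A⊗B)⊗E. -/
def OneLOCCInstr.qOut {X Y Z : Type} [Fintype X] [DecidableEq X] [Fintype Y] [DecidableEq Y]
    [Fintype Z] [DecidableEq Z] {m : ℕ} (T : OneLOCCInstr X Y m)
    (ω : Matrix ((X × Y) × Z) ((X × Y) × Z) ℂ) : Matrix (Y × Z) (Y × Z) ℂ :=
  ∑ x, T.comp x ω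

/-- The maximally mixed state. -/
def maxMixed (d : Type) [Fintype d] [DecidableEq d] : Matrix d d ℂ :=
  ((Fintype.card d : ℂ))⁻¹ • (1 : Matrix d d ℂ)

/-- Relative entropy of "entanglement" w.r.t. a set of states G and a set of
measurements Ms (measurements encoded as pairs of an outcome count and a POVM). -/
def ErG {d : Type} [Fintype d] [DecidableEq d]
    (G : Set (Matrix d d ℂ)) (Ms : Set (Σ m : ℕ, Fin m → Matrix d d ℂ))
    (ρ : Matrix d d ℂ) : ℝ≥0∞ :=
  ⨅ (σ : Matrix d d ℂ) (_ : σ ∈ G),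
    ⨆ (M : Σ m : ℕ, Fin m → Matrix d d ℂ) (_ : M ∈ Ms),
      klDiv2 (mProb M.2 ρ) (mProb M.2 σ)

/-- The distinguishability (pseudo-)norm ‖ρ−ρ'‖_Ms induced by a set of measurements. -/
def distMeas {d : Type} [Fintype d] [DecidableEq d]
    (Ms : Set (Σ m : ℕ, Fin m → Matrix d d ℂ)) (ρ ρ' : Matrix d d ℂ) : ℝ :=
  ⨆ (M : Σ m : ℕ, Fin m → Matrix d d ℂ) (_ : M ∈ Ms),
    ∑ x, |mProb M.2 ρ x - mProb M.2 ρ' x|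

/-- One-way LOCC distinguishability norm ‖ρ−ρ'‖_{1-LOCC}. -/
def oneLOCCDist {X Y : Type} [Fintype X] [DecidableEq X] [Fintype Y] [DecidableEq Y]
    (ρ ρ' : Matrix (X × Y) (X × Y) ℂ) : ℝ :=
  ⨆ (k : ℕ) (l : ℕ) (R : Fin k → Matrix X X ℂ) (S : Fin k → Fin l → Matrix Y Y ℂ)
    (_ : OneLOCCData R S),
    ∑ p, |mProb (oneLOCCPOVM R S) ρ p - mProb (oneLOCCPOVM R S) ρ' p|

/-- Reindexing a tripartite system (A⊗B)⊗E into the bipartite split B : (A⊗E). -/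
def splitBAE {X Y Z : Type} : (X × Y) × Z ≃ Y × (X × Z) where
  toFun := fun u => (u.1.2, (u.1.1, u.2))
  invFun := fun u => ((u.2.1, u.1), u.2.2)
  left_inv := fun _ => rfl
  right_inv := fun _ => rfl

/-- A tripartite state regarded as a bipartite state across B : AE. -/
def asBAE {X Y Z : Type} (ρ : Matrix ((X × Y) × Z) ((X × Y) × Z) ℂ) :
    Matrix (Y × (X × Z)) (Y × (X × Z)) ℂ :=
  Matrix.reindex splitBAE splitBAE ρ

end QIT

open QIT

variable {dA dB dE : Type} [Fintype dA] [DecidableEq dA] [Fintype dB] [DecidableEq dB]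
  [Fintype dE] [DecidableEq dE]


/-!
For a PPT effect `M`, `tr(Φ_d M) = tr(Φ_dᴳ Mᴳ) = d⁻¹ tr(F Mᴳ) ≤ d⁻¹ tr M`, because the partial
transpose of `Φ_d` is `F / d` for the swap `F`, and `1 - F ≥ 0` since `F² = 1`. Hence the outcome
probabilities under `σ = Φ_d / (d+1) + 𝟙 / (d(d+1))` are at least `2 / (d+1)` times those under
`Φ_d`, which bounds the relative entropy by `log((d+1)/2)`.

That `σ` is separable comes from twirling `|u⟩⟨u| ⊗ |ū⟩⟨ū|` over the phase vectors
`u = (i^{c_j})_j / √d`, `c ∈ (ℤ/4)^d`: character orthogonality turns the average into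
`(dΦ_d + 𝟙 - D) / d²` with `D = ∑_j |jj⟩⟨jj|`, and the missing `D` is added back with the product
states `|jj⟩⟨jj|`.
-/

open scoped MatrixOrder in
theorem Matrix.PosSemidef.trace_mul_nonneg {n 𝕜 : Type*} [Fintype n] [RCLike 𝕜]
    {A B : Matrix n n 𝕜} (hA : A.PosSemidef) (hB : B.PosSemidef) : 0 ≤ (A * B).trace := by
  obtain ⟨C, rfl⟩ := CStarAlgebra.nonneg_iff_eq_star_mul_self.mp hB.nonneg
  rw [← Matrix.mul_assoc, trace_mul_comm, ← Matrix.mul_assoc]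
  exact (hA.mul_mul_conjTranspose_same C).trace_nonneg

namespace QIT

section Measurement

variable {X : Type} [Fintype X]

theorem mProb_nonneg {n : Type} [Fintype n] [DecidableEq n] {M : X → Matrix n n ℂ}
    {ρ : Matrix n n ℂ} (hM : IsPOVM M) (hρ : ρ.PosSemidef) (x : X) : 0 ≤ mProb M ρ x :=
  (Complex.nonneg_iff.mp (hρ.trace_mul_nonneg (hM.1 x))).1

theorem sum_mProb {n : Type} [Fintype n] [DecidableEq n] {M : X → Matrix n n ℂ}
    {ρ : Matrix n n ℂ} (hM : IsPOVM M) (hρ : IsState ρ) : ∑ x, mProb M ρ x = 1 := by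
  simp only [mProb, ← Complex.re_sum, ← trace_sum, ← Matrix.mul_sum, hM.2, Matrix.mul_one, hρ.2,
    Complex.one_re]

theorem klDiv2_le_logb_of_le_mul {P Q : X → ℝ} {c : ℝ} (hc : 0 < c) (hP : ∀ x, 0 ≤ P x)
    (hP1 : ∑ x, P x = 1) (hPQ : ∀ x, P x ≤ c * Q x) :
    klDiv2 P Q ≤ ENNReal.ofReal (Real.logb 2 c) := by
  have hsupp : ∀ x, Q x = 0 → P x = 0 := fun x hx =>
    le_antisymm (by simpa [hx] using hPQ x) (hP x)
  rw [klDiv2, if_pos hsupp]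
  refine ENNReal.ofReal_le_ofReal ?_
  calc ∑ x, P x * Real.logb 2 (P x / Q x) ≤ ∑ x, P x * Real.logb 2 c := by
        refine Finset.sum_le_sum fun x _ => ?_
        rcases (hP x).eq_or_lt with hx | hx
        · simp [← hx]
        have hQ : 0 < Q x := pos_of_mul_pos_right (hx.trans_le (hPQ x)) hc.le
        exact mul_le_mul_of_nonneg_left (Real.logb_le_logb_of_le one_lt_two (by positivity)
          ((div_le_iff₀ hQ).2 (hPQ x))) hx.le
    _ = Real.logb 2 c := by rw [← Finset.sum_mul, hP1, one_mul]

end Measurement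

section PPT

variable {X Y : Type}

def swapOp (X : Type) [DecidableEq X] : Matrix (X × X) (X × X) ℂ :=
  of fun p q => if p = q.swap then 1 else 0

theorem swapOp_isHermitian [DecidableEq X] : (swapOp X).IsHermitian := by
  ext p q
  simp [swapOp, conjTranspose_apply, eq_comm (a := q), Prod.swap_eq_iff_eq_swap]

theorem swapOp_mul_self [Fintype X] [DecidableEq X] : swapOp X * swapOp X = 1 := by
  ext p q
  simp [swapOp, Matrix.mul_apply, Matrix.one_apply]

theorem posSemidef_one_sub_swapOp [Fintype X] [DecidableEq X] : (1 - swapOp X).PosSemidef := by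
  -- `F² = 1` makes `1 - F` twice a projection
  have hsq : (1 - swapOp X)ᴴ * (1 - swapOp X) = (2 : ℂ) • (1 - swapOp X) := by
    rw [conjTranspose_sub, conjTranspose_one, swapOp_isHermitian.eq, sub_mul, mul_sub, mul_sub,
      swapOp_mul_self]
    simp only [one_mul, mul_one, two_smul]
    abel
  have h := (posSemidef_conjTranspose_mul_self (1 - swapOp X)).smul
    (a := (2⁻¹ : ℂ)) (by norm_num [Complex.le_def])
  rwa [hsq, smul_smul, inv_mul_cancel₀ two_ne_zero, one_smul] at h

theorem trace_swapOp_mul_le [Fintype X] [DecidableEq X] {N : Matrix (X × X) (X × X) ℂ}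
    (hN : N.PosSemidef) : (swapOp X * N).trace ≤ N.trace := by
  have h := posSemidef_one_sub_swapOp.trace_mul_nonneg hN
  rwa [Matrix.sub_mul, Matrix.one_mul, trace_sub, sub_nonneg] at h

theorem ptranspose_ptranspose (M : Matrix (X × Y) (X × Y) ℂ) : ptranspose (ptranspose M) = M :=
  rfl

theorem trace_ptranspose_mul [Fintype X] [Fintype Y] (A B : Matrix (X × Y) (X × Y) ℂ) :
    (ptranspose A * B).trace = (A * ptranspose B).trace := by
  simp only [trace, diag, Matrix.mul_apply, ptranspose, Matrix.of_apply, Fintype.sum_prod_type]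
  rw [Finset.sum_comm]
  conv_lhs => enter [2, b]; rw [Finset.sum_comm]
  rw [Finset.sum_comm]

end PPT

variable {d : ℕ}

theorem isState_MES (hd : 0 < d) : IsState (MES d) := by
  let w : Fin d × Fin d → ℂ := fun p => if p.1 = p.2 then 1 else 0
  have hMES : MES d = (d : ℂ)⁻¹ • vecMulVec w (star w) := by
    ext p q
    simp only [MES, w, Matrix.of_apply, Matrix.smul_apply, vecMulVec_apply, Pi.star_apply,
      smul_eq_mul]
    split_ifs <;> simp_all
  refine ⟨hMES ▸ (posSemidef_vecMulVec_self_star _).smul (by positivity), ?_⟩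
  simp only [trace, diag, MES, Matrix.of_apply, and_self, Fintype.sum_prod_type, Finset.sum_ite_eq,
    Finset.mem_univ, if_true, Finset.sum_const, Finset.card_univ, Fintype.card_fin, nsmul_eq_mul]
  exact mul_inv_cancel₀ (by exact_mod_cast hd.ne')

theorem ptranspose_MES : ptranspose (MES d) = (d : ℂ)⁻¹ • swapOp (Fin d) := by
  ext p q
  simp only [ptranspose, MES, swapOp, Matrix.of_apply, Matrix.smul_apply, smul_eq_mul, Prod.ext_iff,
    Prod.fst_swap, Prod.snd_swap]
  split_ifs <;> grind

theorem natCast_mul_trace_MES_mul_le (hd : 0 < d)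
    {M : Matrix (Fin d × Fin d) (Fin d × Fin d) ℂ} (hM : (ptranspose M).PosSemidef) :
    (d : ℂ) * (MES d * M).trace ≤ M.trace := by
  have hΓ := trace_ptranspose_mul (MES d) (ptranspose M)
  rw [ptranspose_MES, ptranspose_ptranspose, Matrix.smul_mul, trace_smul, smul_eq_mul] at hΓ
  calc (d : ℂ) * (MES d * M).trace = (swapOp (Fin d) * ptranspose M).trace := by
        rw [← hΓ, ← mul_assoc, mul_inv_cancel₀ (by exact_mod_cast hd.ne'), one_mul]
    _ ≤ (ptranspose M).trace := trace_swapOp_mul_le hM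
    _ = M.trace := rfl

def sepIsotropic (d : ℕ) : Matrix (Fin d × Fin d) (Fin d × Fin d) ℂ :=
  ((d : ℂ) + 1)⁻¹ • MES d + ((d : ℂ) * ((d : ℂ) + 1))⁻¹ • 1

section Isotropic

variable {X : Type}

theorem mProb_sepIsotropic (M : X → Matrix (Fin d × Fin d) (Fin d × Fin d) ℂ) (x : X) :
    mProb M (sepIsotropic d) x = (mProb M (MES d) x + (M x).trace.re / d) / (d + 1) := by
  simp only [mProb, sepIsotropic, Matrix.add_mul, Matrix.smul_mul, Matrix.one_mul, trace_add,
    trace_smul, smul_eq_mul]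
  have h1 : ((d : ℂ) + 1)⁻¹ = ((d + 1 : ℝ)⁻¹ : ℝ) := by push_cast; rfl
  have h2 : ((d : ℂ) * ((d : ℂ) + 1))⁻¹ = ((d * (d + 1) : ℝ)⁻¹ : ℝ) := by push_cast; rfl
  rw [h1, h2, Complex.add_re, Complex.re_ofReal_mul, Complex.re_ofReal_mul]
  field_simp

theorem mProb_MES_le_mul_mProb_sepIsotropic (hd : 0 < d)
    {M : X → Matrix (Fin d × Fin d) (Fin d × Fin d) ℂ} {x : X}
    (hM : (ptranspose (M x)).PosSemidef) :
    mProb M (MES d) x ≤ ((d + 1) / 2) * mProb M (sepIsotropic d) x := by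
  have h := (Complex.le_def.mp (natCast_mul_trace_MES_mul_le hd hM)).1
  simp only [Complex.mul_re, Complex.natCast_re, Complex.natCast_im, zero_mul, sub_zero] at h
  have hd' : (0 : ℝ) < d := Nat.cast_pos.mpr hd
  rw [mProb_sepIsotropic, mProb]
  field_simp
  linarith

theorem klDiv2_MES_sepIsotropic_le [Fintype X] (hd : 0 < d)
    {M : X → Matrix (Fin d × Fin d) (Fin d × Fin d) ℂ} (hM : IsPOVM M)
    (hppt : ∀ x, (ptranspose (M x)).PosSemidef) :
    klDiv2 (mProb M (MES d)) (mProb M (sepIsotropic d)) ≤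
      ENNReal.ofReal (Real.logb 2 ((d + 1) / 2)) :=
  klDiv2_le_logb_of_le_mul (by positivity) (mProb_nonneg hM (isState_MES hd).1)
    (sum_mProb hM (isState_MES hd)) fun x => mProb_MES_le_mul_mProb_sepIsotropic hd (hppt x)

end Isotropic

section Separable

theorem IsState.transpose {n : Type} [Fintype n] {ρ : Matrix n n ℂ} (hρ : IsState ρ) :
    IsState ρᵀ :=
  ⟨hρ.1.transpose, by rw [trace_transpose, hρ.2]⟩

theorem isSeparable_sum {X Y ι : Type} [Fintype X] [Fintype Y] [Fintype ι] {p : ι → ℝ}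
    {ρ : ι → Matrix X X ℂ} {τ : ι → Matrix Y Y ℂ} (hp : ∀ i, 0 ≤ p i) (hp1 : ∑ i, p i = 1)
    (hρ : ∀ i, IsState (ρ i)) (hτ : ∀ i, IsState (τ i)) :
    IsSeparable (∑ i, (p i : ℂ) • (ρ i ⊗ₖ τ i)) := by
  let e := (Fintype.equivFin ι).symm
  exact ⟨Fintype.card ι, p ∘ e, ρ ∘ e, τ ∘ e, fun _ => hp _, (e.sum_comp p).trans hp1,
    fun _ => hρ _, fun _ => hτ _, (e.sum_comp fun i => (p i : ℂ) • (ρ i ⊗ₖ τ i)).symm⟩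

theorem forall_apply_sub_sub_add_eq_zero_iff {j k l m : Fin d} :
    (∀ c : Fin d → ZMod 4, c j - c l - c k + c m = 0) ↔ (j = l ∧ k = m) ∨ (j = k ∧ l = m) := by
  refine ⟨fun h => ?_, ?_⟩
  · -- at `c = Pi.single r 1` the left side is an integer of size `≤ 2`, so it vanishes in `ℤ`
    have key : ∀ r, ((if j = r then 1 else 0) - (if l = r then 1 else 0) -
        (if k = r then 1 else 0) + (if m = r then 1 else 0) : ℤ) = 0 := fun r => by
      have hr : (((if j = r then 1 else 0) - (if l = r then 1 else 0) -
          (if k = r then 1 else 0) + (if m = r then 1 else 0) : ℤ) : ZMod 4) = 0 := by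
        push_cast
        simpa only [Pi.single_apply] using h (Pi.single r 1)
      have h4 := (ZMod.intCast_zmod_eq_zero_iff_dvd _ 4).mp hr
      split_ifs at h4 ⊢ <;> omega
    have hj := key j
    have hk := key k
    have hl := key l
    clear h key
    by_cases hjl : j = l <;> by_cases hjk : j = k <;> by_cases hkm : k = m <;>
      by_cases hlm : l = m <;> by_cases hjm : j = m <;> by_cases hkl : k = l <;>
      simp_all [eq_comm]
  · rintro (⟨rfl, rfl⟩ | ⟨rfl, rfl⟩) c <;> abel

def iChar : AddChar (ZMod 4) ℂ := AddChar.zmodChar 4 Complex.I_pow_four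

theorem iChar_eq_one_iff {a : ZMod 4} : iChar a = 1 ↔ a = 0 := by
  rw [iChar, AddChar.zmodChar_apply, Complex.isPrimitiveRoot_I.pow_eq_one_iff_dvd,
    ← ZMod.natCast_eq_zero_iff, ZMod.natCast_zmod_val]

def phaseVec (c : Fin d → ZMod 4) : Fin d → ℂ := fun j => iChar (c j)

theorem phaseVec_mul_star (c : Fin d → ZMod 4) (j : Fin d) :
    phaseVec c j * star (phaseVec c j) = 1 := by
  rw [phaseVec, Complex.star_def, ← AddChar.map_neg_eq_conj, ← AddChar.map_add_eq_mul,
    add_neg_cancel, AddChar.map_zero_eq_one]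

theorem sum_phaseVec_moment (j k l m : Fin d) :
    ∑ c : Fin d → ZMod 4,
      phaseVec c j * star (phaseVec c l) * star (phaseVec c k) * phaseVec c m =
      if (j = l ∧ k = m) ∨ (j = k ∧ l = m) then 4 ^ d else 0 := by
  let ψ : AddChar (Fin d → ZMod 4) ℂ := iChar.compAddMonoidHom
    (Pi.evalAddMonoidHom (fun _ => ZMod 4) j - Pi.evalAddMonoidHom (fun _ => ZMod 4) l -
      Pi.evalAddMonoidHom (fun _ => ZMod 4) k + Pi.evalAddMonoidHom (fun _ => ZMod 4) m)
  have hterm : ∀ c,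
      phaseVec c j * star (phaseVec c l) * star (phaseVec c k) * phaseVec c m = ψ c := by
    intro c
    simp [ψ, phaseVec, sub_eq_add_neg, AddChar.map_add_eq_mul, AddChar.map_neg_eq_conj]
  have hψ : ψ = 0 ↔ (j = l ∧ k = m) ∨ (j = k ∧ l = m) := by
    rw [AddChar.eq_zero_iff, ← forall_apply_sub_sub_add_eq_zero_iff]
    simp [ψ, iChar_eq_one_iff]
  simp_rw [hterm, AddChar.sum_eq_ite, hψ]
  simp

def phaseState (c : Fin d → ZMod 4) : Matrix (Fin d) (Fin d) ℂ :=
  (d : ℂ)⁻¹ • vecMulVec (phaseVec c) (star (phaseVec c))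

theorem isState_phaseState (hd : 0 < d) (c : Fin d → ZMod 4) : IsState (phaseState c) := by
  refine ⟨(posSemidef_vecMulVec_self_star _).smul (by positivity), ?_⟩
  simp only [phaseState, trace_smul, trace_vecMulVec, dotProduct, Pi.star_apply,
    phaseVec_mul_star, Finset.sum_const, Finset.card_univ, Fintype.card_fin, nsmul_eq_mul,
    mul_one, smul_eq_mul]
  exact inv_mul_cancel₀ (by exact_mod_cast hd.ne')

theorem isState_diagonal_single (j : Fin d) : IsState (diagonal (Pi.single j (1 : ℂ))) :=
  ⟨PosSemidef.diagonal (Pi.single_nonneg.2 zero_le_one), by simp [trace_diagonal]⟩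

theorem sum_phaseState_kronecker_apply (j k l m : Fin d) :
    (∑ c : Fin d → ZMod 4, phaseState c ⊗ₖ (phaseState c)ᵀ) (j, k) (l, m) =
      (d : ℂ)⁻¹ * (d : ℂ)⁻¹ * if (j = l ∧ k = m) ∨ (j = k ∧ l = m) then 4 ^ d else 0 := by
  rw [← sum_phaseVec_moment, Matrix.sum_apply, Finset.mul_sum]
  refine Finset.sum_congr rfl fun c _ => ?_
  simp only [kroneckerMap_apply, transpose_apply, phaseState, Matrix.smul_apply, vecMulVec_apply,
    Pi.star_apply, smul_eq_mul]
  ring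

theorem sum_diagonal_single_kronecker_apply (j k l m : Fin d) :
    (∑ i, diagonal (Pi.single i (1 : ℂ)) ⊗ₖ diagonal (Pi.single i (1 : ℂ))) (j, k) (l, m) =
      if (j = l ∧ k = m) ∧ (j = k ∧ l = m) then 1 else 0 := by
  simp only [Matrix.sum_apply, kroneckerMap_apply, diagonal_apply, Pi.single_apply, mul_ite,
    mul_one, mul_zero, Finset.sum_ite_irrel, Finset.sum_ite_eq, Finset.mem_univ, if_true,
    Finset.sum_const_zero]
  split_ifs <;> grind

theorem sepIsotropic_eq_sum (hd : 0 < d) :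
    sepIsotropic d =
      ((d / ((d + 1) * 4 ^ d) : ℝ) : ℂ) • ∑ c : Fin d → ZMod 4, phaseState c ⊗ₖ (phaseState c)ᵀ +
      (((d * (d + 1) : ℝ)⁻¹ : ℝ) : ℂ) •
        ∑ j : Fin d, diagonal (Pi.single j (1 : ℂ)) ⊗ₖ diagonal (Pi.single j (1 : ℂ)) := by
  ext ⟨j, k⟩ ⟨l, m⟩
  simp only [Matrix.add_apply, Matrix.smul_apply, sum_phaseState_kronecker_apply,
    sum_diagonal_single_kronecker_apply, sepIsotropic, MES, Matrix.one_apply, Matrix.of_apply,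
    smul_eq_mul, Prod.mk.injEq]
  have hd' : (d : ℂ) ≠ 0 := by exact_mod_cast hd.ne'
  push_cast
  by_cases hA : j = l ∧ k = m <;> by_cases hB : j = k ∧ l = m <;> simp_all [-not_and] <;>
    field_simp

theorem isSeparable_sepIsotropic (hd : 0 < d) : IsSeparable (sepIsotropic d) := by
  have h := isSeparable_sum (ι := (Fin d → ZMod 4) ⊕ Fin d)
    (p := Sum.elim (fun _ => d / ((d + 1) * 4 ^ d)) fun _ => (d * (d + 1))⁻¹)
    (ρ := Sum.elim phaseState fun j => diagonal (Pi.single j 1))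
    (τ := Sum.elim (fun c => (phaseState c)ᵀ) fun j => diagonal (Pi.single j 1))
    (by rintro (c | j) <;> simp only [Sum.elim_inl, Sum.elim_inr] <;> positivity)
    (by
      simp only [Fintype.sum_sum_type, Sum.elim_inl, Sum.elim_inr, Finset.sum_const,
        Finset.card_univ, Fintype.card_pi, ZMod.card, Finset.prod_const, Fintype.card_fin,
        nsmul_eq_mul]
      push_cast
      field_simp)
    (by rintro (c | j); exacts [isState_phaseState hd c, isState_diagonal_single j])
    (by rintro (c | j); exacts [(isState_phaseState hd c).transpose, isState_diagonal_single j])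
  rw [sepIsotropic_eq_sum hd]
  simpa only [Fintype.sum_sum_type, Sum.elim_inl, Sum.elim_inr, ← Finset.smul_sum] using h

end Separable

end QIT

/-- Upper bound part of Proposition 4: against the separable isotropic state
σ = (1/(d+1))Φ_d + (d/(d+1))·(1/d²)·1, every PPT measurement yields relative
entropy at most log((d+1)/2); hence E_{r,PPT}(Φ_d) ≤ log(d+1) − 1. -/
theorem ErPPT_MES_upperBound (d : ℕ) (hd : 0 < d) :
    (∀ (m : ℕ) (M : Fin m → Matrix (Fin d × Fin d) (Fin d × Fin d) ℂ),
      IsPOVM M → (∀ x, (ptranspose (M x)).PosSemidef) →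
      klDiv2 (mProb M (MES d))
             (mProb M (((d : ℂ) + 1)⁻¹ • MES d +
                ((d : ℂ) * ((d : ℂ) + 1))⁻¹ • (1 : Matrix (Fin d × Fin d) (Fin d × Fin d) ℂ)))
        ≤ ENNReal.ofReal (Real.logb 2 (((d : ℝ) + 1) / 2))) ∧
    ErPPT (MES d) ≤ ENNReal.ofReal (Real.logb 2 ((d : ℝ) + 1) - 1) := by
  have hlog : Real.logb 2 (((d : ℝ) + 1) / 2) = Real.logb 2 ((d : ℝ) + 1) - 1 := by
    rw [Real.logb_div (by positivity) two_ne_zero, Real.logb_self_eq_one one_lt_two]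
  refine ⟨fun _ _ => klDiv2_MES_sepIsotropic_le hd, ?_⟩
  rw [← hlog]
  exact (iInf₂_le _ (isSeparable_sepIsotropic hd)).trans
    (iSup₂_le fun _ _ => iSup_le fun hM => klDiv2_MES_sepIsotropic_le hd hM.1 hM.2)
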